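/- Fix d ≥ 2 and an abstract stacking structure on n vertices in which the base facet B := {1, …, d} is never stacked on (σ_i ≠ B for all i). Let q : {1, …, n} → ℝ^d be a lifting of a flat embedding of this structure, and suppose that every point q(i) has nonnegative z-coordinate, that the stress ω_X is negative for every ridge X incident to the base facet B, and that ω_X is positive for every other ridge X. Then q realizes a convex polytope: for every facet F ∈ F_n, all points q(1), …, q(n) lie in the closed halfspace below the affine hyperplane spanned by q(F), and all points lie in the closed halfspace z ≥ 0 above the hyperplane spanned by q(B); hence the convex hull of q(1), …, q(n) is a convex d-polytope whose facets are spanned by q(F) for F ∈ F_n ∪ {B}. -/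

import Mathlib

/-!
Each stacking step is a stellar subdivision of one cell, so the projections `π(q(F))`,
`F ∈ F_n ∖ {B}`, triangulate the base simplex `π(q(B))`: the cells are simplices with disjoint
interiors, no vertex lies in a cell it does not belong to, and every wall of a cell not contained
in `B` is shared with a neighbouring cell on its other side. Positive stress on such a ridge says
that the plane of the neighbouring cell passes above the opposite vertex. Now fix a vertex `v`
and a cell whose plane is lowest over `π(q v)`. If `π(q v)` were outside this cell, some wall
would separate them; it cannot lie in `B` because `π(q v)` is in the base simplex, and crossing
an interior wall would lead to a lower plane. So `π(q v)` lies in the cell, hence `v` is one of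
its vertices and `q v` lies on its plane, below the plane of every other cell.
-/

/-- `[S]`: determinant of the k×k matrix whose columns are the points of `S`
with an appended final entry 1. -/
noncomputable def mdet {k : ℕ} (S : Fin k → (Fin (k - 1) → ℝ)) : ℝ :=
  Matrix.det (Matrix.of (fun i j : Fin k =>
    if h : (i : ℕ) < k - 1 then S j ⟨i, h⟩ else 1))

/-- `π`: deletion of the last coordinate. -/
def projZ {d : ℕ} (p : Fin d → ℝ) : Fin (d - 1) → ℝ :=
  fun i => p (Fin.castLE (Nat.sub_le d 1) i)

/-- `⟦S⟧ = [π(S)]` for a sequence of d points of ℝ^d. -/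
noncomputable def pdet {d : ℕ} (S : Fin d → (Fin d → ℝ)) : ℝ :=
  mdet (fun i => projZ (S i))

/-- last ('z') coordinate of a point of ℝ^d. -/
def zc {d : ℕ} (q : Fin d → ℝ) : ℝ :=
  if h : 0 < d then q ⟨d - 1, by omega⟩ else 0

/-- `(p, z)`: point of ℝ^d obtained from `p ∈ ℝ^{d-1}` by appending `z`. -/
def liftPt {d : ℕ} (p : Fin (d - 1) → ℝ) (z : ℝ) : Fin d → ℝ :=
  fun i => if h : (i : ℕ) < d - 1 then p ⟨i, h⟩ else z

/-- concatenation `X ∘ s` of a sequence of `k-1` points with one more point. -/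
def snoc' {α : Type*} {k : ℕ} (X : Fin (k - 1) → α) (s : α) : Fin k → α :=
  fun i => if h : (i : ℕ) < k - 1 then X ⟨i, h⟩ else s

/-- `facetsAux d σ m` is the family `F_{d+1+m}` of facets of the abstract stacking
structure with stacking choices `σ`: `F_{d+1}` consists of all `d`-element subsets of
`{1, …, d+1}`, and `F_i` is obtained from `F_{i-1}` by removing the stacked-on facet
`σ_i` and adding the `d` facets `(σ_i ∖ {x}) ∪ {i}`, `x ∈ σ_i`. -/
def facetsAux (d : ℕ) (σ : ℕ → Finset ℕ) : ℕ → Finset (Finset ℕ)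
  | 0 => (Finset.Icc 1 (d + 1)).powersetCard d
  | m + 1 =>
    let i := d + 2 + m
    ((facetsAux d σ m).erase (σ i)) ∪ (σ i).image (fun x => insert i ((σ i).erase x))

/-- `facets d σ j` is the facet family `F_j` (for `j ≥ d+1`). -/
def facets (d : ℕ) (σ : ℕ → Finset ℕ) (j : ℕ) : Finset (Finset ℕ) :=
  facetsAux d σ (j - (d + 1))

open Finset

section Determinant

variable {k : ℕ}

lemma snoc'_castLE {α : Type*} (X : Fin (k - 1) → α) (s : α) (j : Fin (k - 1)) :
    snoc' X s (Fin.castLE (Nat.sub_le k 1) j) = X j := by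
  simp [snoc']

lemma snoc'_last {α : Type*} (hk : 0 < k) (X : Fin (k - 1) → α) (s : α) :
    snoc' X s ⟨k - 1, by omega⟩ = s := by
  simp [snoc']

def homogenize : (Fin (k - 1) → ℝ) →ᵃ[ℝ] (Fin k → ℝ) :=
  AffineMap.pi fun i => if h : (i : ℕ) < k - 1 then
    (LinearMap.proj (R := ℝ) (φ := fun _ : Fin (k - 1) => ℝ) ⟨i, h⟩).toAffineMap
  else AffineMap.const ℝ _ 1

lemma homogenize_apply (p : Fin (k - 1) → ℝ) (i : Fin k) :
    homogenize p i = if h : (i : ℕ) < k - 1 then p ⟨i, h⟩ else 1 := by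
  simp only [homogenize, AffineMap.pi_apply]
  split_ifs <;> rfl

lemma mdet_eq_det (S : Fin k → Fin (k - 1) → ℝ) :
    mdet S = (Matrix.of fun j => homogenize (S j)).det := by
  rw [mdet, ← Matrix.det_transpose]
  congr 1
  ext j i
  simp [homogenize_apply]

lemma mdet_eq_zero_of_eq (S : Fin k → Fin (k - 1) → ℝ) {i j : Fin k} (hij : i ≠ j)
    (h : S i = S j) : mdet S = 0 := by
  rw [mdet_eq_det]
  exact Matrix.det_zero_of_row_eq hij (by ext c; simp [h])

lemma mdet_ne_zero {S : Fin k → Fin (k - 1) → ℝ} (hS : AffineIndependent ℝ S) : mdet S ≠ 0 := by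
  rw [mdet_eq_det, Ne, ← Matrix.exists_vecMul_eq_zero_iff]
  rintro ⟨w, hw, hwS⟩
  have hk : 0 < k := (Function.ne_iff.1 hw).choose.pos
  have hrow (i : Fin k) : ∑ j, w j * homogenize (S j) i = 0 := by
    simpa [Matrix.vecMul, dotProduct] using congrFun hwS i
  have hsum : ∑ j, w j = 0 := by
    simpa [homogenize_apply] using hrow ⟨k - 1, by omega⟩
  have hcomb : ∑ j, w j • S j = 0 := by
    ext c
    simpa [homogenize_apply] using hrow (Fin.castLE (Nat.sub_le k 1) c)
  refine hw (funext ((affineIndependent_iff_of_fintype ℝ S).1 hS w hsum ?_))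
  rw [Finset.weightedVSub_eq_linear_combination _ hsum]
  exact hcomb

/-- `p ↦ mdet (snoc' Y p)`, affine because the determinant is linear in each row. -/
noncomputable def snocDet (hk : 0 < k) (Y : Fin (k - 1) → Fin (k - 1) → ℝ) :
    (Fin (k - 1) → ℝ) →ᵃ[ℝ] ℝ :=
  ((Matrix.detRowAlternating : (Fin k → ℝ) [⋀^Fin k]→ₗ[ℝ] ℝ).toMultilinearMap.toLinearMap
    (fun j => homogenize (snoc' Y 0 j)) ⟨k - 1, by omega⟩).toAffineMap.comp homogenize

lemma snocDet_apply (hk : 0 < k) (Y : Fin (k - 1) → Fin (k - 1) → ℝ) (p : Fin (k - 1) → ℝ) :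
    snocDet hk Y p = mdet (snoc' Y p) := by
  have hrows : Function.update (fun j => homogenize (snoc' Y 0 j)) ⟨k - 1, by omega⟩
      (homogenize p) = fun j => homogenize (snoc' Y p j) := by
    funext j
    by_cases hj : (j : ℕ) < k - 1
    · rw [Function.update_of_ne (by simp only [ne_eq, Fin.ext_iff]; omega)]
      simp [snoc', hj]
    · rw [show j = ⟨k - 1, by omega⟩ from Fin.ext (by simp only; omega), Function.update_self,
        snoc'_last hk]
  rw [mdet_eq_det, snocDet, AffineMap.comp_apply, LinearMap.coe_toAffineMap,
    MultilinearMap.toLinearMap_apply, hrows]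
  rfl

lemma snocDet_apply_eq_zero (hk : 0 < k) (Y : Fin (k - 1) → Fin (k - 1) → ℝ) (j : Fin (k - 1)) :
    snocDet hk Y (Y j) = 0 := by
  rw [snocDet_apply]
  refine mdet_eq_zero_of_eq _ (i := Fin.castLE (Nat.sub_le k 1) j) (j := ⟨k - 1, by omega⟩)
    (by simp only [ne_eq, Fin.ext_iff, Fin.val_castLE]; omega) ?_
  rw [snoc'_castLE, snoc'_last hk]

end Determinant

section Simplex

variable {E : Type*} [NormedAddCommGroup E] [NormedSpace ℝ E]

def IsSimplex (P : ℕ → E) (F : Finset ℕ) : Prop :=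
  AffineIndependent ℝ (fun v : F => P v) ∧ F.card = Module.finrank ℝ E + 1

def cell (P : ℕ → E) (F : Finset ℕ) : Set E := convexHull ℝ (P '' F)

variable {P : ℕ → E} {F G H : Finset ℕ} {u v w : ℕ}

lemma apply_le_of_mem_cell {f : E →ᵃ[ℝ] ℝ} {c : ℝ} (hf : ∀ v ∈ F, f (P v) ≤ c) {p : E}
    (hp : p ∈ cell P F) : f p ≤ c :=
  convexHull_min (by rintro _ ⟨v, hv, rfl⟩; exact hf v hv) ((convex_Iic c).affine_preimage f) hp

lemma cell_subset_cell (h : ∀ v ∈ F, P v ∈ cell P G) : cell P F ⊆ cell P G :=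
  convexHull_min (by rintro _ ⟨v, hv, rfl⟩; exact h v hv) (convex_convexHull ℝ _)

lemma mem_cell_of_mem (hv : v ∈ F) : P v ∈ cell P F :=
  subset_convexHull ℝ _ ⟨v, hv, rfl⟩

lemma cell_stellar_subset {τ : Finset ℕ} {i : ℕ} (hi : P i ∈ interior (cell P τ)) (x : ℕ) :
    cell P (insert i (τ.erase x)) ⊆ cell P τ :=
  cell_subset_cell fun v hv => by
    rcases mem_insert.1 hv with rfl | hv
    · exact interior_subset hi
    · exact mem_cell_of_mem (mem_of_mem_erase hv)

lemma isSimplex_of_dual (hcard : F.card = Module.finrank ℝ E + 1) (f : ℕ → E →ᵃ[ℝ] ℝ)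
    (hf : ∀ u ∈ F, ∀ w ∈ F, f u (P w) = if w = u then 1 else 0) : IsSimplex P F := by
  classical
  refine ⟨AffineIndependent.of_comp (AffineMap.pi fun u : F => f u) ?_, hcard⟩
  have hdual : (AffineMap.pi fun u : F => f u) ∘ (fun v : F => P v) = Pi.basisFun ℝ F := by
    funext w
    ext u
    rw [Function.comp_apply, AffineMap.pi_apply, Pi.basisFun_apply, hf u u.2 w w.2,
      Pi.single_apply]
    simp only [Subtype.ext_iff, eq_comm]
  rw [hdual]
  exact (Pi.basisFun ℝ F).linearIndependent.affineIndependent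

variable [FiniteDimensional ℝ E]

noncomputable def IsSimplex.basis (h : IsSimplex P F) : AffineBasis F ℝ E :=
  ⟨fun v => P v, h.1, by
    rw [h.1.affineSpan_eq_top_iff_card_eq_finrank_add_one, Fintype.card_coe, h.2]⟩

open scoped Classical in
/-- Zero unless `F` is a simplex containing `u`. -/
noncomputable def bary (P : ℕ → E) (F : Finset ℕ) (u : ℕ) : E →ᵃ[ℝ] ℝ :=
  if h : IsSimplex P F ∧ u ∈ F then h.1.basis.coord ⟨u, h.2⟩ else 0

lemma IsSimplex.bary_eq (h : IsSimplex P F) (hu : u ∈ F) :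
    bary P F u = h.basis.coord ⟨u, hu⟩ :=
  dif_pos ⟨h, hu⟩

lemma IsSimplex.bary_apply_self (h : IsSimplex P F) (hu : u ∈ F) : bary P F u (P u) = 1 := by
  rw [h.bary_eq hu]
  exact h.basis.coord_apply_eq _

lemma IsSimplex.bary_apply_of_ne (h : IsSimplex P F) (hu : u ∈ F) (hw : w ∈ F) (hwu : w ≠ u) :
    bary P F u (P w) = 0 := by
  rw [h.bary_eq hu]
  exact h.basis.coord_apply_ne (i := ⟨u, hu⟩) (j := ⟨w, hw⟩) (by simpa [eq_comm] using hwu)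

lemma IsSimplex.ext (h : IsSimplex P F) {f g : E →ᵃ[ℝ] ℝ} (hfg : ∀ v ∈ F, f (P v) = g (P v)) :
    f = g :=
  AffineMap.ext_on h.basis.tot (by rintro _ ⟨v, rfl⟩; exact hfg v v.2)

lemma IsSimplex.eq_smul_bary (h : IsSimplex P F) (hu : u ∈ F) {f : E →ᵃ[ℝ] ℝ}
    (hf : ∀ w ∈ F, w ≠ u → f (P w) = 0) : f = f (P u) • bary P F u := by
  refine h.ext fun w hw => ?_
  by_cases hwu : w = u
  · subst hwu
    simp [h.bary_apply_self hw]
  · simp [hf w hw hwu, h.bary_apply_of_ne hu hw hwu]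

lemma IsSimplex.bary_eq_of_apply (h : IsSimplex P F) (hu : u ∈ F) {f : E →ᵃ[ℝ] ℝ}
    (hf : ∀ w ∈ F, f (P w) = if w = u then 1 else 0) : bary P F u = f := by
  rw [h.eq_smul_bary hu (f := f) fun w hw hwu => by simp [hf w hw, hwu], hf u hu, if_pos rfl,
    one_smul]

lemma IsSimplex.cell_eq_convexHull_range (h : IsSimplex P F) :
    cell P F = convexHull ℝ (Set.range h.basis) := by
  rw [cell, Set.image_eq_range]
  rfl

lemma IsSimplex.mem_cell_iff (h : IsSimplex P F) {p : E} :
    p ∈ cell P F ↔ ∀ u ∈ F, 0 ≤ bary P F u p := by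
  rw [h.cell_eq_convexHull_range, h.basis.convexHull_eq_nonneg_coord, Set.mem_ofPred_eq,
    Subtype.forall]
  exact forall₂_congr fun u hu => by rw [h.bary_eq hu]

lemma IsSimplex.mem_interior_cell_iff (h : IsSimplex P F) {p : E} :
    p ∈ interior (cell P F) ↔ ∀ u ∈ F, 0 < bary P F u p := by
  rw [h.cell_eq_convexHull_range, h.basis.interior_convexHull, Set.mem_ofPred_eq,
    Subtype.forall]
  exact forall₂_congr fun u hu => by rw [h.bary_eq hu]

noncomputable def interp (P : ℕ → E) (z : ℕ → ℝ) (F : Finset ℕ) : E →ᵃ[ℝ] ℝ :=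
  ∑ u ∈ F, z u • bary P F u

lemma IsSimplex.interp_apply (h : IsSimplex P F) (z : ℕ → ℝ) (hv : v ∈ F) :
    interp P z F (P v) = z v := by
  have hsum : interp P z F (P v) = ∑ u ∈ F, z u * bary P F u (P v) :=
    map_sum (⟨⟨fun f : E →ᵃ[ℝ] ℝ => f (P v), rfl⟩, fun _ _ => rfl⟩ : (E →ᵃ[ℝ] ℝ) →+ ℝ) _ _
  rw [hsum, Finset.sum_eq_single v (fun u hu huv => by rw [h.bary_apply_of_ne hu hv huv.symm,
    mul_zero]) (fun hv' => absurd hv hv'), h.bary_apply_self hv, mul_one]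

lemma IsSimplex.eq_interp (h : IsSimplex P F) {z : ℕ → ℝ} {f : E →ᵃ[ℝ] ℝ}
    (hf : ∀ v ∈ F, f (P v) = z v) : f = interp P z F :=
  h.ext fun v hv => by rw [hf v hv, h.interp_apply z hv]

lemma IsSimplex.interp_eq_add_smul_bary (hH : IsSimplex P H) (hG : IsSimplex P G) (z : ℕ → ℝ)
    (hu : u ∈ H) (hGH : H.erase u ⊆ G) :
    interp P z G = interp P z H + (interp P z G (P u) - z u) • bary P H u := by
  refine hH.ext fun w hw => ?_
  by_cases hwu : w = u
  · subst hwu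
    simp [hH.interp_apply z hw, hH.bary_apply_self hw]
  · simp [hH.interp_apply z hw, hH.bary_apply_of_ne hu hw hwu,
      hG.interp_apply z (hGH (mem_erase.2 ⟨hwu, hw⟩))]

lemma IsSimplex.bary_nonneg_of_erase_subset {B : Finset ℕ} (hH : IsSimplex P H)
    (hB : IsSimplex P B) (hu : u ∈ H) (hsub : H.erase u ⊆ B) (hPu : P u ∈ cell P B) {p : E}
    (hp : p ∈ cell P B) : 0 ≤ bary P H u p := by
  obtain ⟨x, hxB, hxH⟩ := exists_mem_notMem_of_card_lt_card (s := H.erase u) (t := B)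
    (by rw [card_erase_of_mem hu, hH.2, hB.2]; omega)
  have herase : H.erase u = B.erase x :=
    eq_of_subset_of_card_le (fun w hw => mem_erase.2 ⟨ne_of_mem_of_not_mem hw hxH, hsub hw⟩)
      (by rw [card_erase_of_mem hxB, card_erase_of_mem hu, hH.2, hB.2])
  have hprop : bary P H u = bary P H u (P x) • bary P B x := hB.eq_smul_bary hxB fun w hw hwx => by
    have hw' : w ∈ H.erase u := herase ▸ mem_erase.2 ⟨hwx, hw⟩
    exact hH.bary_apply_of_ne hu (mem_of_mem_erase hw') (ne_of_mem_erase hw')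
  have hone : 1 = bary P H u (P x) * bary P B x (P u) := by
    rw [← hH.bary_apply_self hu]
    nth_rw 1 [hprop]
    rfl
  have hc : 0 < bary P H u (P x) := by
    nlinarith [hB.mem_cell_iff.1 hPu x hxB]
  rw [hprop]
  exact mul_nonneg hc.le (hB.mem_cell_iff.1 hp x hxB)

end Simplex

section Stellar

variable {E : Type*} [NormedAddCommGroup E] [NormedSpace ℝ E] [FiniteDimensional ℝ E]
  {P : ℕ → E} {τ : Finset ℕ} {i u x y : ℕ}

/- With `λ = bary P τ` and `μ_w = λ_w (P i) > 0`, the barycentric coordinates of the simplex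
`insert i (τ.erase x)` are `μ_x⁻¹ • λ_x` at `i` and `λ_u - (μ_u / μ_x) • λ_x` at `u ≠ x`. -/

lemma stellar_dual_self (hτ : IsSimplex P τ) (hiτ : i ∉ τ) (hi : P i ∈ interior (cell P τ))
    (hx : x ∈ τ) (w : ℕ) (hw : w ∈ insert i (τ.erase x)) :
    ((bary P τ x (P i))⁻¹ • bary P τ x) (P w) = if w = i then 1 else 0 := by
  have hμ := (hτ.mem_interior_cell_iff.1 hi x hx).ne'
  rcases mem_insert.1 hw with rfl | hw
  · simp [hμ]
  · have hwτ := mem_of_mem_erase hw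
    simp [hτ.bary_apply_of_ne hx hwτ (ne_of_mem_erase hw), ne_of_mem_of_not_mem hwτ hiτ]

lemma stellar_dual_of_mem (hτ : IsSimplex P τ) (hiτ : i ∉ τ) (hi : P i ∈ interior (cell P τ))
    (hx : x ∈ τ) (hu : u ∈ τ.erase x) (w : ℕ) (hw : w ∈ insert i (τ.erase x)) :
    (bary P τ u - (bary P τ u (P i) / bary P τ x (P i)) • bary P τ x) (P w) =
      if w = u then 1 else 0 := by
  have hμ := (hτ.mem_interior_cell_iff.1 hi x hx).ne'
  have huτ := mem_of_mem_erase hu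
  rcases mem_insert.1 hw with rfl | hw
  · simp [hμ, (ne_of_mem_of_not_mem huτ hiτ).symm]
  · have hwτ := mem_of_mem_erase hw
    by_cases hwu : w = u
    · subst hwu
      simp [hτ.bary_apply_self hwτ, hτ.bary_apply_of_ne hx hwτ (ne_of_mem_erase hw)]
    · simp [hτ.bary_apply_of_ne huτ hwτ hwu, hτ.bary_apply_of_ne hx hwτ (ne_of_mem_erase hw),
        hwu]

lemma isSimplex_stellar (hτ : IsSimplex P τ) (hiτ : i ∉ τ) (hi : P i ∈ interior (cell P τ))
    (hx : x ∈ τ) : IsSimplex P (insert i (τ.erase x)) := by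
  classical
  refine isSimplex_of_dual ?_ (fun u => if u = i then (bary P τ x (P i))⁻¹ • bary P τ x else
    bary P τ u - (bary P τ u (P i) / bary P τ x (P i)) • bary P τ x) fun u hu w hw => ?_
  · rw [card_insert_of_notMem fun h => hiτ (mem_of_mem_erase h), card_erase_add_one hx, hτ.2]
  · rcases mem_insert.1 hu with rfl | hu
    · rw [if_pos rfl]
      exact stellar_dual_self hτ hiτ hi hx w hw
    · rw [if_neg (ne_of_mem_of_not_mem (mem_of_mem_erase hu) hiτ)]
      exact stellar_dual_of_mem hτ hiτ hi hx hu w hw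

lemma bary_stellar_self (hτ : IsSimplex P τ) (hiτ : i ∉ τ) (hi : P i ∈ interior (cell P τ))
    (hx : x ∈ τ) : bary P (insert i (τ.erase x)) i = (bary P τ x (P i))⁻¹ • bary P τ x :=
  (isSimplex_stellar hτ hiτ hi hx).bary_eq_of_apply (mem_insert_self _ _)
    (stellar_dual_self hτ hiτ hi hx)

lemma bary_stellar_of_mem (hτ : IsSimplex P τ) (hiτ : i ∉ τ) (hi : P i ∈ interior (cell P τ))
    (hx : x ∈ τ) (hu : u ∈ τ.erase x) : bary P (insert i (τ.erase x)) u =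
      bary P τ u - (bary P τ u (P i) / bary P τ x (P i)) • bary P τ x :=
  (isSimplex_stellar hτ hiτ hi hx).bary_eq_of_apply (mem_insert_of_mem hu)
    (stellar_dual_of_mem hτ hiτ hi hx hu)

lemma bary_stellar_apply_neg (hτ : IsSimplex P τ) (hiτ : i ∉ τ)
    (hi : P i ∈ interior (cell P τ)) (hx : x ∈ τ) (hu : u ∈ τ.erase x) :
    bary P (insert i (τ.erase x)) u (P x) < 0 := by
  have huτ := mem_of_mem_erase hu
  have hμx := hτ.mem_interior_cell_iff.1 hi x hx
  have hμu := hτ.mem_interior_cell_iff.1 hi u huτ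
  rw [bary_stellar_of_mem hτ hiτ hi hx hu]
  simp only [AffineMap.coe_sub, AffineMap.coe_smul, Pi.sub_apply, Pi.smul_apply, smul_eq_mul,
    hτ.bary_apply_of_ne huτ hx (ne_of_mem_erase hu).symm, hτ.bary_apply_self hx]
  linarith [div_pos hμu hμx]

lemma disjoint_stellar (hτ : IsSimplex P τ) (hiτ : i ∉ τ) (hi : P i ∈ interior (cell P τ))
    (hx : x ∈ τ) (hy : y ∈ τ) (hxy : x ≠ y) :
    Disjoint (interior (cell P (insert i (τ.erase x)))) (cell P (insert i (τ.erase y))) := by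
  have hyx : y ∈ τ.erase x := mem_erase.2 ⟨hxy.symm, hy⟩
  have hF := isSimplex_stellar hτ hiτ hi hx
  have hyF : y ∈ insert i (τ.erase x) := mem_insert_of_mem hyx
  refine Set.disjoint_left.2 fun p hpx hpy => (hF.mem_interior_cell_iff.1 hpx y hyF).not_ge ?_
  refine apply_le_of_mem_cell (fun v hv => ?_) hpy
  rcases mem_insert.1 hv with rfl | hv
  · exact (hF.bary_apply_of_ne hyF (mem_insert_self _ _) (ne_of_mem_of_not_mem hy hiτ).symm).le
  · by_cases hvx : v = x
    · subst hvx
      exact (bary_stellar_apply_neg hτ hiτ hi hx hyx).le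
    · exact (hF.bary_apply_of_ne hyF (mem_insert_of_mem (mem_erase.2 ⟨hvx, mem_of_mem_erase hv⟩))
        (ne_of_mem_erase hv)).le

end Stellar

section Triangulation

variable {E : Type*} [NormedAddCommGroup E] [NormedSpace ℝ E] [FiniteDimensional ℝ E]
  {P : ℕ → E} {B V : Finset ℕ} {𝓘 : Finset (Finset ℕ)} {τ F H : Finset ℕ} {i u x : ℕ}

def stack (𝓘 : Finset (Finset ℕ)) (τ : Finset ℕ) (i : ℕ) : Finset (Finset ℕ) :=
  𝓘.erase τ ∪ τ.image fun x => insert i (τ.erase x)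

lemma mem_stack : F ∈ stack 𝓘 τ i ↔ (F ≠ τ ∧ F ∈ 𝓘) ∨ ∃ x ∈ τ, insert i (τ.erase x) = F := by
  simp [stack]

/-- The cells `𝓘`, with vertices in `V`, triangulate `cell P B`; walls inside `B` are on its
boundary. -/
structure IsTriangulation (P : ℕ → E) (B V : Finset ℕ) (𝓘 : Finset (Finset ℕ)) : Prop where
  isSimplex : ∀ F ∈ 𝓘, IsSimplex P F
  subset : ∀ F ∈ 𝓘, F ⊆ V
  mem_cell_base : ∀ v ∈ V, P v ∈ cell P B
  exists_adjacent : ∀ H ∈ 𝓘, ∀ u ∈ H, ¬H.erase u ⊆ B →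
    ∃ G ∈ 𝓘, G ∩ H = H.erase u ∧ ∃ t ∈ G, t ∉ H ∧ bary P H u (P t) < 0
  disjoint : ∀ G ∈ 𝓘, ∀ H ∈ 𝓘, G ≠ H → Disjoint (interior (cell P G)) (cell P H)
  mem_of_mem_cell : ∀ H ∈ 𝓘, ∀ v ∈ V, P v ∈ cell P H → v ∈ H

lemma isTriangulation_singleton (hB : IsSimplex P B) : IsTriangulation P B B {B} where
  isSimplex := by simpa using hB
  subset := by simp
  mem_cell_base _ hv := mem_cell_of_mem hv
  exists_adjacent H hH _ _ hwall := by
    rw [mem_singleton.1 hH] at hwall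
    exact absurd (erase_subset _ _) hwall
  disjoint G hG H hH hGH := by
    rw [mem_singleton.1 hG, mem_singleton.1 hH] at hGH
    exact absurd rfl hGH
  mem_of_mem_cell H hH _ hv _ := by rwa [mem_singleton.1 hH]

namespace IsTriangulation

lemma exists_adjacent_stack_of_mem (h : IsTriangulation P B V 𝓘) (hτ : τ ∈ 𝓘) (hiV : i ∉ V)
    (hi : P i ∈ interior (cell P τ)) (hH : H ∈ 𝓘) (hu : u ∈ H) (hwall : ¬H.erase u ⊆ B) :
    ∃ G ∈ stack 𝓘 τ i, G ∩ H = H.erase u ∧ ∃ t ∈ G, t ∉ H ∧ bary P H u (P t) < 0 := by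
  obtain ⟨G, hG, hGH, t, htG, htH, hside⟩ := h.exists_adjacent H hH u hu hwall
  by_cases hGτ : G = τ
  -- the neighbour `τ` was subdivided: the new cell opposite `t` replaces it, with apex `i`
  · subst hGτ
    have hGs := h.isSimplex G hG
    have hHs := h.isSimplex H hH
    have hiH : i ∉ H := fun h' => hiV (h.subset H hH h')
    have herase : G.erase t = H.erase u := (eq_of_subset_of_card_le
      (fun w hw => mem_erase.2 ⟨ne_of_mem_of_not_mem (mem_of_mem_erase hw) htH,
        mem_of_mem_inter_left (hGH ▸ hw : w ∈ G ∩ H)⟩)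
      (by rw [card_erase_of_mem htG, card_erase_of_mem hu, hGs.2, hHs.2])).symm
    have hprop : bary P H u = bary P H u (P t) • bary P G t := hGs.eq_smul_bary htG
      fun w hw hwt => by
        have hw' : w ∈ H.erase u := herase ▸ mem_erase.2 ⟨hwt, hw⟩
        exact hHs.bary_apply_of_ne hu (mem_of_mem_erase hw') (ne_of_mem_erase hw')
    refine ⟨insert i (G.erase t), mem_stack.2 (Or.inr ⟨t, htG, rfl⟩), ?_, i, mem_insert_self _ _,
      hiH, ?_⟩
    · rw [insert_inter_of_notMem hiH, herase, inter_eq_left.2 (erase_subset _ _)]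
    · rw [hprop]
      exact mul_neg_of_neg_of_pos hside (hGs.mem_interior_cell_iff.1 hi t htG)
  · exact ⟨G, mem_stack.2 (Or.inl ⟨hGτ, hG⟩), hGH, t, htG, htH, hside⟩

lemma exists_adjacent_stack_of_stellar (h : IsTriangulation P B V 𝓘) (hτ : τ ∈ 𝓘)
    (hiV : i ∉ V) (hi : P i ∈ interior (cell P τ)) (hx : x ∈ τ)
    (hu : u ∈ insert i (τ.erase x)) (hwall : ¬(insert i (τ.erase x)).erase u ⊆ B) :
    ∃ G ∈ stack 𝓘 τ i, G ∩ insert i (τ.erase x) = (insert i (τ.erase x)).erase u ∧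
      ∃ t ∈ G, t ∉ insert i (τ.erase x) ∧ bary P (insert i (τ.erase x)) u (P t) < 0 := by
  have hτs := h.isSimplex τ hτ
  have hiτ : i ∉ τ := fun h' => hiV (h.subset τ hτ h')
  -- the wall opposite `i` is a wall of `τ`; the other walls are shared with new cells
  rcases mem_insert.1 hu with rfl | hu
  · have herase : (insert u (τ.erase x)).erase u = τ.erase x :=
      erase_insert fun h' => hiτ (mem_of_mem_erase h')
    rw [herase] at hwall ⊢
    obtain ⟨G, hG, hGτ, t, htG, htτ, hside⟩ := h.exists_adjacent τ hτ x hx hwall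
    have hGne : G ≠ τ := by
      rintro rfl
      rw [inter_self] at hGτ
      exact notMem_erase x G (hGτ ▸ hx)
    have huG : u ∉ G := fun h' => hiV (h.subset G hG h')
    refine ⟨G, mem_stack.2 (Or.inl ⟨hGne, hG⟩), ?_, t, htG, ?_, ?_⟩
    · rw [inter_insert_of_notMem huG, inter_erase, hGτ, erase_idem]
    · rw [mem_insert, not_or]
      exact ⟨ne_of_mem_of_not_mem htG huG, fun h' => htτ (mem_of_mem_erase h')⟩
    · rw [bary_stellar_self hτs hiτ hi hx]
      exact mul_neg_of_pos_of_neg (inv_pos.2 (hτs.mem_interior_cell_iff.1 hi x hx)) hside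
  · have huτ := mem_of_mem_erase hu
    have hxu : x ≠ u := (ne_of_mem_erase hu).symm
    refine ⟨insert i (τ.erase u), mem_stack.2 (Or.inr ⟨u, huτ, rfl⟩), ?_, x, ?_, ?_,
      bary_stellar_apply_neg hτs hiτ hi hx hu⟩
    · rw [← insert_inter_distrib, erase_insert_of_ne (ne_of_mem_of_not_mem huτ hiτ).symm]
      congr 1
      ext w
      simp only [mem_inter, mem_erase]
      tauto
    · exact mem_insert_of_mem (mem_erase.2 ⟨hxu, hx⟩)
    · rw [mem_insert, not_or]
      exact ⟨ne_of_mem_of_not_mem hx hiτ, notMem_erase x τ⟩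

lemma disjoint_stack (h : IsTriangulation P B V 𝓘) (hτ : τ ∈ 𝓘) (hiV : i ∉ V)
    (hi : P i ∈ interior (cell P τ)) {G H : Finset ℕ} (hG : G ∈ stack 𝓘 τ i)
    (hH : H ∈ stack 𝓘 τ i) (hGH : G ≠ H) : Disjoint (interior (cell P G)) (cell P H) := by
  have hiτ : i ∉ τ := fun h' => hiV (h.subset τ hτ h')
  rcases mem_stack.1 hG with ⟨hGτ, hG⟩ | ⟨x, hx, rfl⟩ <;>
    rcases mem_stack.1 hH with ⟨hHτ, hH⟩ | ⟨y, hy, rfl⟩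
  · exact h.disjoint G hG H hH hGH
  · exact (h.disjoint G hG τ hτ hGτ).mono_right (cell_stellar_subset hi y)
  · exact (h.disjoint τ hτ H hH hHτ.symm).mono_left (interior_mono (cell_stellar_subset hi x))
  · exact disjoint_stellar (h.isSimplex τ hτ) hiτ hi hx hy fun hxy => hGH (by rw [hxy])

lemma mem_of_mem_cell_stack [Nontrivial E] (h : IsTriangulation P B V 𝓘) (hτ : τ ∈ 𝓘)
    (hiV : i ∉ V) (hi : P i ∈ interior (cell P τ)) (hH : H ∈ stack 𝓘 τ i) {v : ℕ}
    (hv : v ∈ insert i V) (hPv : P v ∈ cell P H) : v ∈ H := by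
  have hτs := h.isSimplex τ hτ
  have hiτ : i ∉ τ := fun h' => hiV (h.subset τ hτ h')
  rcases mem_stack.1 hH with ⟨hHτ, hH'⟩ | ⟨x, hx, rfl⟩ <;> rcases mem_insert.1 hv with rfl | hv
  · exact absurd hPv (Set.disjoint_left.1 (h.disjoint τ hτ H hH' hHτ.symm) hi)
  · exact h.mem_of_mem_cell H hH' v hv hPv
  · exact mem_insert_self _ _
  · have hvτ := h.mem_of_mem_cell τ hτ v hv (cell_stellar_subset hi x hPv)
    refine mem_insert_of_mem (mem_erase.2 ⟨?_, hvτ⟩)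
    rintro rfl
    obtain ⟨u, hu⟩ : (τ.erase v).Nonempty := by
      rw [← card_pos, card_erase_of_mem hvτ, hτs.2]
      simpa using Module.finrank_pos (R := ℝ) (M := E)
    exact (bary_stellar_apply_neg hτs hiτ hi hvτ hu).not_ge
      ((isSimplex_stellar hτs hiτ hi hvτ).mem_cell_iff.1 hPv u (mem_insert_of_mem hu))

lemma stack [Nontrivial E] (h : IsTriangulation P B V 𝓘) (hτ : τ ∈ 𝓘) (hiV : i ∉ V)
    (hi : P i ∈ interior (cell P τ)) : IsTriangulation P B (insert i V) (stack 𝓘 τ i) where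
  isSimplex F hF := by
    rcases mem_stack.1 hF with ⟨-, hF⟩ | ⟨x, hx, rfl⟩
    · exact h.isSimplex F hF
    · exact isSimplex_stellar (h.isSimplex τ hτ) (fun h' => hiV (h.subset τ hτ h')) hi hx
  subset F hF := by
    rcases mem_stack.1 hF with ⟨-, hF⟩ | ⟨x, hx, rfl⟩
    · exact (h.subset F hF).trans (subset_insert _ _)
    · exact insert_subset_insert i ((erase_subset _ _).trans (h.subset τ hτ))
  mem_cell_base v hv := by
    rcases mem_insert.1 hv with rfl | hv
    · exact cell_subset_cell (fun w hw => h.mem_cell_base w (h.subset τ hτ hw)) (interior_subset hi)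
    · exact h.mem_cell_base v hv
  exists_adjacent H hH u hu hwall := by
    rcases mem_stack.1 hH with ⟨-, hH⟩ | ⟨x, hx, rfl⟩
    · exact h.exists_adjacent_stack_of_mem hτ hiV hi hH hu hwall
    · exact h.exists_adjacent_stack_of_stellar hτ hiV hi hx hu hwall
  disjoint G hG H hH hGH := h.disjoint_stack hτ hiV hi hG hH hGH
  mem_of_mem_cell H hH v hv hPv := h.mem_of_mem_cell_stack hτ hiV hi hH hv hPv

/-- A cell whose plane is lowest over `P v` contains `P v`: otherwise some wall separates them,
and crossing it lowers the plane. -/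
lemma le_interp (h : IsTriangulation P B V 𝓘) (hB : IsSimplex P B) {z : ℕ → ℝ}
    (hfold : ∀ H ∈ 𝓘, ∀ G ∈ 𝓘, ∀ u ∈ H, G ∩ H = H.erase u → ∀ t ∈ G, t ∉ H →
      bary P H u (P t) < 0 → z u < interp P z G (P u))
    (hF : F ∈ 𝓘) {v : ℕ} (hv : v ∈ V) : z v ≤ interp P z F (P v) := by
  obtain ⟨H, hH, hmin⟩ := 𝓘.exists_min_image (fun K => interp P z K (P v)) ⟨F, hF⟩
  have hHs := h.isSimplex H hH
  suffices hcell : P v ∈ cell P H by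
    rw [← hHs.interp_apply z (h.mem_of_mem_cell H hH v hv hcell)]
    exact hmin F hF
  refine hHs.mem_cell_iff.2 fun u hu => not_lt.1 fun hneg => ?_
  by_cases hwall : H.erase u ⊆ B
  · exact hneg.not_ge (hHs.bary_nonneg_of_erase_subset hB hu hwall
      (h.mem_cell_base u (h.subset H hH hu)) (h.mem_cell_base v hv))
  · obtain ⟨G, hG, hGH, t, htG, htH, hside⟩ := h.exists_adjacent H hH u hu hwall
    have hbend := hfold H hH G hG u hu hGH t htG htH hside
    have hle := hmin G hG
    rw [hHs.interp_eq_add_smul_bary (h.isSimplex G hG) z hu (hGH ▸ inter_subset_left)] at hle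
    simp only [AffineMap.coe_add, AffineMap.coe_smul, Pi.add_apply, Pi.smul_apply,
      smul_eq_mul] at hle
    nlinarith

end IsTriangulation

end Triangulation

section Stacking

lemma powersetCard_insert_card {α : Type*} [DecidableEq α] {a : α} {s : Finset α} (ha : a ∉ s) :
    (insert a s).powersetCard s.card = insert s (s.image fun x => insert a (s.erase x)) := by
  ext T
  simp only [mem_powersetCard, mem_insert, mem_image]
  constructor
  · rintro ⟨hT, hcard⟩
    by_cases haT : a ∈ T
    · obtain ⟨x, hxs, hxT⟩ := exists_mem_notMem_of_card_lt_card (s := T.erase a) (t := s)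
        (by rw [card_erase_of_mem haT, hcard]
            exact Nat.sub_lt (hcard ▸ card_pos.2 ⟨a, haT⟩) one_pos)
      refine Or.inr ⟨x, hxs, ?_⟩
      rw [← insert_erase haT]
      congr 1
      refine (eq_of_subset_of_card_le (fun w hw => ?_) ?_).symm
      · have hwa := ne_of_mem_erase hw
        exact mem_erase.2 ⟨ne_of_mem_of_not_mem hw hxT,
          (mem_insert.1 (hT (mem_of_mem_erase hw))).resolve_left hwa⟩
      · rw [card_erase_of_mem hxs, card_erase_of_mem haT, hcard]
    · exact Or.inl (eq_of_subset_of_card_le ((subset_insert_iff_of_notMem haT).1 hT)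
        hcard.ge)
  · rintro (rfl | ⟨x, hx, rfl⟩)
    · exact ⟨subset_insert _ _, rfl⟩
    · exact ⟨insert_subset_insert a (erase_subset _ _), by
        rw [card_insert_of_notMem fun h => ha (mem_of_mem_erase h), card_erase_add_one hx]⟩

variable {d : ℕ} {σ : ℕ → Finset ℕ}

lemma facets_first (hd : 1 ≤ d) : facets d σ (d + 1) =
    insert (Icc 1 d) ((Icc 1 d).image fun x => insert (d + 1) ((Icc 1 d).erase x)) := by
  have h := powersetCard_insert_card (a := d + 1) (s := Icc 1 d) (by simp)
  rw [Nat.card_Icc, Nat.add_sub_cancel, insert_Icc_right_eq_Icc_add_one (by omega)] at h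
  rw [facets, Nat.sub_self, ← h]
  rfl

lemma facets_succ {m : ℕ} (hm : d + 1 ≤ m) :
    facets d σ (m + 1) = stack (facets d σ m) (σ (m + 1)) (m + 1) := by
  rw [facets, facets, show m + 1 - (d + 1) = m - (d + 1) + 1 by omega, facetsAux,
    show d + 2 + (m - (d + 1)) = m + 1 by omega]
  rfl

lemma stack_erase {𝓕 : Finset (Finset ℕ)} {τ B : Finset ℕ} {i : ℕ} (hiB : i ∉ B) :
    (stack 𝓕 τ i).erase B = stack (𝓕.erase B) τ i := by
  have hnew : ∀ x, insert i (τ.erase x) ≠ B := fun x h => hiB (h ▸ mem_insert_self _ _)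
  ext F
  simp only [stack, mem_erase, mem_union, mem_image]
  constructor
  · rintro ⟨hFB, ⟨hFτ, hF⟩ | hF⟩
    · exact Or.inl ⟨hFτ, hFB, hF⟩
    · exact Or.inr hF
  · rintro (⟨hFτ, hFB, hF⟩ | ⟨x, hx, rfl⟩)
    · exact ⟨hFB, Or.inl ⟨hFτ, hF⟩⟩
    · exact ⟨hnew x, Or.inr ⟨x, hx, rfl⟩⟩

lemma isTriangulation_facets {E : Type*} [NormedAddCommGroup E] [NormedSpace ℝ E]
    [FiniteDimensional ℝ E] [Nontrivial E] {P : ℕ → E} {n : ℕ} (hd : 1 ≤ d)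
    (hB : IsSimplex P (Icc 1 d))
    (hσ : ∀ i, d + 2 ≤ i → i ≤ n → σ i ∈ facets d σ (i - 1))
    (hσB : ∀ i, d + 2 ≤ i → i ≤ n → σ i ≠ Icc 1 d)
    (hfirst : P (d + 1) ∈ interior (cell P (Icc 1 d)))
    (hstack : ∀ i, d + 2 ≤ i → i ≤ n → P i ∈ interior (cell P (σ i))) {m : ℕ}
    (hm : d + 1 ≤ m) (hmn : m ≤ n) :
    IsTriangulation P (Icc 1 d) (Icc 1 m) ((facets d σ m).erase (Icc 1 d)) := by
  induction m, hm using Nat.le_induction with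
  | base =>
    have h := (isTriangulation_singleton hB).stack (mem_singleton_self _) (by simp) hfirst
    rw [stack, erase_singleton, empty_union, insert_Icc_right_eq_Icc_add_one (by omega)] at h
    rwa [facets_first hd, erase_insert fun hB' => by
      obtain ⟨x, -, hx⟩ := mem_image.1 hB'
      have h' := hx ▸ mem_insert_self (d + 1) ((Icc 1 d).erase x)
      simp at h']
  | succ m hm ih =>
    have hτ : σ (m + 1) ∈ (facets d σ m).erase (Icc 1 d) :=
      mem_erase.2 ⟨hσB _ (by omega) hmn, by simpa using hσ (m + 1) (by omega) hmn⟩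
    have h := (ih (by omega)).stack hτ (by simp) (hstack _ (by omega) hmn)
    rwa [insert_Icc_right_eq_Icc_add_one (by omega), ← stack_erase (by rw [mem_Icc]; omega),
      ← facets_succ hm] at h

end Stacking

section Lifting

variable {d : ℕ}

lemma pdet_snoc' (X : Fin (d - 1) → Fin d → ℝ) (s : Fin d → ℝ) :
    pdet (snoc' X s) = mdet (snoc' (fun j => projZ (X j)) (projZ s)) := by
  unfold pdet
  congr 1
  funext i
  unfold snoc'
  split_ifs <;> rfl

lemma snoc'_injective {α : Type*} {k : ℕ} {X : Fin (k - 1) → α} {s : α}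
    (hX : Function.Injective X) (hs : ∀ j, X j ≠ s) : Function.Injective (snoc' X s) := by
  intro a b hab
  unfold snoc' at hab
  split_ifs at hab with ha hb hb
  · simpa [Fin.ext_iff] using hX hab
  · exact absurd hab (hs _)
  · exact absurd hab.symm (hs _)
  · exact Fin.ext (by omega)

lemma isSimplex_Icc (hd : 1 ≤ d) {P : ℕ → Fin (d - 1) → ℝ}
    (hindep : AffineIndependent ℝ fun i : Fin d => P (i + 1)) : IsSimplex P (Icc 1 d) := by
  refine ⟨?_, by rw [Nat.card_Icc, Module.finrank_fin_fun]; omega⟩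
  have hIcc (v : Icc 1 d) := mem_Icc.1 v.2
  let e : Icc 1 d ↪ Fin d := ⟨fun v => ⟨v - 1, by have := hIcc v; omega⟩, fun v w hvw => by
    have := hIcc v; have := hIcc w
    exact Subtype.ext (by simp [Fin.ext_iff] at hvw; omega)⟩
  have he : (fun v : Icc 1 d => P v) = (fun i : Fin d => P (i + 1)) ∘ e := by
    funext v
    show P v = P ((v : ℕ) - 1 + 1)
    have := hIcc v
    congr
    omega
  rw [he]
  exact hindep.comp_embedding e

variable {q : ℕ → Fin d → ℝ}

lemma pdet_eq_mul_bary (hd : 0 < d) {H : Finset ℕ} {u : ℕ}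
    (hH : IsSimplex (fun v => projZ (q v)) H) (hu : u ∈ H) {Xs : Fin (d - 1) → ℕ}
    (hXs : ∀ w ∈ H.erase u, ∃ j, Xs j = w) (s : ℕ) :
    pdet (snoc' (fun j => q (Xs j)) (q s)) =
      pdet (snoc' (fun j => q (Xs j)) (q u)) * bary (fun v => projZ (q v)) H u (projZ (q s)) := by
  simp only [pdet_snoc', ← snocDet_apply hd]
  have h := hH.eq_smul_bary hu (f := snocDet hd fun j => projZ (q (Xs j))) fun w hw hwu => by
    obtain ⟨j, rfl⟩ := hXs w (mem_erase.2 ⟨hwu, hw⟩)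
    exact snocDet_apply_eq_zero hd _ j
  conv_lhs => rw [h]
  rfl

lemma pdet_ne_zero {H : Finset ℕ} {u : ℕ} (hH : IsSimplex (fun v => projZ (q v)) H) (hu : u ∈ H)
    {Xs : Fin (d - 1) → ℕ} (hinj : Function.Injective Xs) (hXs : ∀ j, Xs j ∈ H.erase u) :
    pdet (snoc' (fun j => q (Xs j)) (q u)) ≠ 0 := by
  have hmem (j : Fin d) : snoc' Xs u j ∈ H := by
    unfold snoc'
    split_ifs
    exacts [mem_of_mem_erase (hXs _), hu]
  let e : Fin d ↪ H := ⟨fun j => ⟨snoc' Xs u j, hmem j⟩, fun a b hab =>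
    snoc'_injective hinj (fun j => ne_of_mem_erase (hXs j)) (congrArg Subtype.val hab)⟩
  rw [pdet_snoc']
  refine mdet_ne_zero ?_
  have he : snoc' (fun j => projZ (q (Xs j))) (projZ (q u)) = (fun v : H => projZ (q v)) ∘ e := by
    funext j
    show _ = projZ (q (snoc' Xs u j))
    unfold snoc'
    split_ifs <;> rfl
  rw [he]
  exact hH.1.comp_embedding e

/-- The stress `ω_X` is positive on every ridge `X` shared by two cells of `𝓘`, the interpolants
playing the role of `z_F` and `z_G`. -/
def PositiveStress (q : ℕ → Fin d → ℝ) (𝓘 : Finset (Finset ℕ)) : Prop :=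
  ∀ F ∈ 𝓘, ∀ G ∈ 𝓘, (F ∩ G).card = d - 1 →
    ∀ Xs : Fin (d - 1) → ℕ, Function.Injective Xs → (∀ j, Xs j ∈ F ∩ G) → ∀ s ∈ F, s ∉ G →
      0 < pdet (snoc' (fun j => q (Xs j)) (q s)) →
      0 < (interp (fun v => projZ (q v)) (fun v => zc (q v)) G (projZ (q s)) -
        interp (fun v => projZ (q v)) (fun v => zc (q v)) F (projZ (q s))) /
          pdet (snoc' (fun j => q (Xs j)) (q s))

/-- The sign of `⟦q(X)∘q(u)⟧` decides whether `H` or `G` is left of the ridge; either way its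
stress gives the inequality. -/
lemma PositiveStress.lt_interp {𝓘 : Finset (Finset ℕ)} (hω : PositiveStress q 𝓘) (hd : 0 < d)
    {H G : Finset ℕ} (hH : H ∈ 𝓘) (hG : G ∈ 𝓘) (hHs : IsSimplex (fun v => projZ (q v)) H)
    (hGs : IsSimplex (fun v => projZ (q v)) G) {u t : ℕ} (hu : u ∈ H) (hGH : G ∩ H = H.erase u)
    (htG : t ∈ G) (htH : t ∉ H)
    (hside : bary (fun v => projZ (q v)) H u (projZ (q t)) < 0) :
    zc (q u) < interp (fun v => projZ (q v)) (fun v => zc (q v)) G (projZ (q u)) := by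
  set P : ℕ → Fin (d - 1) → ℝ := fun v => projZ (q v)
  set z : ℕ → ℝ := fun v => zc (q v)
  have hcard : (H.erase u).card = d - 1 := by
    rw [card_erase_of_mem hu, hHs.2, Module.finrank_fin_fun]
    rfl
  set Xs : Fin (d - 1) → ℕ := fun j => (H.erase u).orderIsoOfFin hcard j
  have hinj : Function.Injective Xs := fun a b hab =>
    ((H.erase u).orderIsoOfFin hcard).injective (Subtype.ext hab)
  have hXs (j : Fin (d - 1)) : Xs j ∈ H.erase u := ((H.erase u).orderIsoOfFin hcard j).2
  have hXsurj (w : ℕ) (hw : w ∈ H.erase u) : ∃ j, Xs j = w :=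
    ⟨((H.erase u).orderIsoOfFin hcard).symm ⟨w, hw⟩, by
      simp only [Xs, OrderIso.apply_symm_apply]⟩
  have hD := pdet_ne_zero (q := q) hHs hu hinj hXs
  have hpdet := pdet_eq_mul_bary hd hHs hu hXsurj
  have hfold := hHs.interp_eq_add_smul_bary hGs z hu (hGH ▸ inter_subset_left)
  have huG : u ∉ G := fun h => notMem_erase u H (hGH ▸ mem_inter.2 ⟨h, hu⟩)
  rcases hD.lt_or_gt with hneg | hpos
  · have hpos' : 0 < pdet (snoc' (fun j => q (Xs j)) (q t)) := by
      rw [hpdet]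
      exact mul_pos_of_neg_of_neg hneg hside
    have h := hω G hG H hH (hGH ▸ hcard) Xs hinj (fun j => hGH ▸ hXs j) t htG htH hpos'
    rw [div_pos_iff_of_pos_right hpos', hfold] at h
    simp only [AffineMap.coe_add, AffineMap.coe_smul, Pi.add_apply, Pi.smul_apply,
      smul_eq_mul] at h
    nlinarith
  · have h := hω H hH G hG (inter_comm G H ▸ hGH ▸ hcard) Xs hinj
      (fun j => inter_comm G H ▸ hGH ▸ hXs j) u hu huG hpos
    rw [div_pos_iff_of_pos_right hpos, hHs.interp_apply z hu] at h
    linarith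

end Lifting

theorem stmt13_general (d : ℕ) (hd : 2 ≤ d) (n : ℕ) (hn : d + 1 ≤ n)
    (σ : ℕ → Finset ℕ)
    (hσ : ∀ i, d + 2 ≤ i → i ≤ n → σ i ∈ facets d σ (i - 1))
    (hB : ∀ i, d + 2 ≤ i → i ≤ n → σ i ≠ Finset.Icc 1 d)
    (q : ℕ → (Fin d → ℝ))
    -- `q` is a lifting of a flat embedding:
    (hindep : AffineIndependent ℝ (fun i : Fin d => projZ (q ((i : ℕ) + 1))))
    (hfirst : projZ (q (d + 1)) ∈
      interior (convexHull ℝ ((fun v => projZ (q v)) '' (Finset.Icc 1 d))))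
    (hstack : ∀ i, d + 2 ≤ i → i ≤ n →
      projZ (q i) ∈ interior (convexHull ℝ ((fun v => projZ (q v)) '' (σ i))))
    -- all `z`-coordinates are nonnegative:
    (hz : ∀ v, 1 ≤ v → v ≤ n → 0 ≤ zc (q v))
    -- sign conditions on the stresses of all ridges:
    (hstress : ∀ F ∈ facets d σ n, ∀ G ∈ facets d σ n, F ≠ G →
      (F ∩ G).card = d - 1 →
      ∀ Xs : Fin (d - 1) → ℕ, Function.Injective Xs → (∀ j, Xs j ∈ F ∩ G) →
      ∀ s ∈ F, s ∉ G →
      ∀ zF zG : (Fin (d - 1) → ℝ) →ᵃ[ℝ] ℝ,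
        (∀ v ∈ F, zF (projZ (q v)) = zc (q v)) →
        (∀ v ∈ G, zG (projZ (q v)) = zc (q v)) →
        0 < (if F = Finset.Icc 1 d then (-1 : ℝ) else 1) *
          pdet (snoc' (fun j => q (Xs j)) (q s)) →
        (if F = Finset.Icc 1 d ∨ G = Finset.Icc 1 d then
          (zG (projZ (q s)) - zF (projZ (q s))) /
            pdet (snoc' (fun j => q (Xs j)) (q s)) < 0
        else
          0 < (zG (projZ (q s)) - zF (projZ (q s))) /
            pdet (snoc' (fun j => q (Xs j)) (q s)))) :
    -- conclusion: `q` realizes a convex polytope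
    (∀ F ∈ facets d σ n, F ≠ Finset.Icc 1 d →
      ∀ zF : (Fin (d - 1) → ℝ) →ᵃ[ℝ] ℝ,
        (∀ v ∈ F, zF (projZ (q v)) = zc (q v)) →
        ∀ v, 1 ≤ v → v ≤ n → zc (q v) ≤ zF (projZ (q v))) ∧
    (∀ v, 1 ≤ v → v ≤ n → 0 ≤ zc (q v)) := by
  refine ⟨fun F hF hFB zF hzF v hv1 hvn => ?_, hz⟩
  have : Nonempty (Fin (d - 1)) := ⟨⟨0, by omega⟩⟩
  have hBs := isSimplex_Icc (P := fun v => projZ (q v)) (by omega) hindep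
  have htri := isTriangulation_facets (by omega) hBs hσ hB hfirst hstack hn le_rfl
  have hω : PositiveStress q ((facets d σ n).erase (Icc 1 d)) := by
    intro F hF G hG hcard Xs hinj hXs s hs hsG hpos
    have h := hstress F (mem_of_mem_erase hF) G (mem_of_mem_erase hG)
      (ne_of_mem_of_not_mem' hs hsG) hcard Xs hinj hXs s hs hsG _ _
      (fun v hv => (htri.isSimplex F hF).interp_apply _ hv)
      (fun v hv => (htri.isSimplex G hG).interp_apply _ hv)
      (by rwa [if_neg (ne_of_mem_erase hF), one_mul])
    rwa [if_neg (not_or.2 ⟨ne_of_mem_erase hF, ne_of_mem_erase hG⟩)] at h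
  have hF' : F ∈ (facets d σ n).erase (Icc 1 d) := mem_erase.2 ⟨hFB, hF⟩
  rw [(htri.isSimplex F hF').eq_interp hzF]
  exact htri.le_interp hBs (fun H hH G hG u hu hGH t htG htH hside =>
    hω.lt_interp (by omega) hH hG (htri.isSimplex H hH) (htri.isSimplex G hG) hu hGH htG htH
      hside) hF' (mem_Icc.2 ⟨hv1, hvn⟩)

/-- Lemma 4: let `q` be a lifting of a flat embedding of an abstract
stacking structure whose base facet `B = {1, …, d}` is never stacked on, with all
`z`-coordinates nonnegative.  Suppose the stress `ω_X` is negative on every ridge `X`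
incident to `B` and positive on every other ridge; here, for a ridge `X = F ∩ G` with
incident facets `F = X ∪ {s}` and `G`, taking any ordering `Xs` of `X`, if `F` is left of
`X` (i.e. `(if F = B then -1 else 1)·⟦q(Xs)∘q(s)⟧ > 0`, the sign being interchanged for the
base facet), then `ω_X = (z_G(π(q s)) − z_F(π(q s)))/⟦q(Xs)∘q(s)⟧` where `z_F, z_G` are the
affine maps whose graphs are the hyperplanes spanned by `q(F)` and `q(G)`.  Then `q`
realizes a convex polytope: all points lie in the closed halfspace below the hyperplane
spanned by `q(F)` for every facet `F ∈ F_n` other than `B`, and in the closed halfspace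
`z ≥ 0` above the hyperplane spanned by `q(B)`. -/
theorem stmt13 (d : ℕ) (hd : 2 ≤ d) (n : ℕ) (hn : d + 1 ≤ n)
    (σ : ℕ → Finset ℕ)
    (hσ : ∀ i, d + 2 ≤ i → i ≤ n → σ i ∈ facets d σ (i - 1))
    (hB : ∀ i, d + 2 ≤ i → i ≤ n → σ i ≠ Finset.Icc 1 d)
    (q : ℕ → (Fin d → ℝ))
    -- `q` is a lifting of a flat embedding:
    (hbase : ∀ v, 1 ≤ v → v ≤ d → zc (q v) = 0)
    (hindep : AffineIndependent ℝ (fun i : Fin d => projZ (q ((i : ℕ) + 1))))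
    (hfirst : projZ (q (d + 1)) ∈
      interior (convexHull ℝ ((fun v => projZ (q v)) '' (Finset.Icc 1 d))))
    (hstack : ∀ i, d + 2 ≤ i → i ≤ n →
      projZ (q i) ∈ interior (convexHull ℝ ((fun v => projZ (q v)) '' (σ i))))
    -- all `z`-coordinates are nonnegative:
    (hz : ∀ v, 1 ≤ v → v ≤ n → 0 ≤ zc (q v))
    -- sign conditions on the stresses of all ridges:
    (hstress : ∀ F ∈ facets d σ n, ∀ G ∈ facets d σ n, F ≠ G →
      (F ∩ G).card = d - 1 →
      ∀ Xs : Fin (d - 1) → ℕ, Function.Injective Xs → (∀ j, Xs j ∈ F ∩ G) →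
      ∀ s ∈ F, s ∉ G →
      ∀ zF zG : (Fin (d - 1) → ℝ) →ᵃ[ℝ] ℝ,
        (∀ v ∈ F, zF (projZ (q v)) = zc (q v)) →
        (∀ v ∈ G, zG (projZ (q v)) = zc (q v)) →
        0 < (if F = Finset.Icc 1 d then (-1 : ℝ) else 1) *
          pdet (snoc' (fun j => q (Xs j)) (q s)) →
        (if F = Finset.Icc 1 d ∨ G = Finset.Icc 1 d then
          (zG (projZ (q s)) - zF (projZ (q s))) /
            pdet (snoc' (fun j => q (Xs j)) (q s)) < 0
        else
          0 < (zG (projZ (q s)) - zF (projZ (q s))) /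
            pdet (snoc' (fun j => q (Xs j)) (q s)))) :
    -- conclusion: `q` realizes a convex polytope
    (∀ F ∈ facets d σ n, F ≠ Finset.Icc 1 d →
      ∀ zF : (Fin (d - 1) → ℝ) →ᵃ[ℝ] ℝ,
        (∀ v ∈ F, zF (projZ (q v)) = zc (q v)) →
        ∀ v, 1 ≤ v → v ≤ n → zc (q v) ≤ zF (projZ (q v))) ∧
    (∀ v, 1 ≤ v → v ≤ n → 0 ≤ zc (q v)) :=
  stmt13_general d hd n hn σ hσ hB q hindep hfirst hstack hz hstress
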